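/- Fix a positive integer n. There exists a polynomial p with integer coefficients of degree 2n and leading coefficient 1, depending only on n, such that for every integer d ≥ 2, the number of bad tuples (j¹, j², j³, j⁴) with j^1_0 = j^2_0 = 1 and j^3_0 = j^4_0 = 2 equals p(d). -/

import Mathlib

/-!
STATEMENT 6: Fix a positive integer `n`. There exists a polynomial `p` with integer
coefficients of degree `2n` and leading coefficient `1`, depending only on `n`, such that for
every integer `d ≥ 2`, the number of bad tuples `(j¹, j², j³, j⁴)` (sequences of length `n+1`
with entries in `{1, …, d}`) with `j^1_0 = j^2_0 = 1` and `j^3_0 = j^4_0 = 2` equals `p(d)`.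
-/

/-- At one step, the four pairs of consecutive values can be split into two disjoint pairs
that agree both at time `i` and at time `i+1`. -/
def StepOK (u v : Fin 4 → ℕ) : Prop :=
  ∃ p q r s : Fin 4, ({p, q, r, s} : Finset (Fin 4)) = Finset.univ ∧
    u p = u q ∧ v p = v q ∧ u r = u s ∧ v r = v s

/-- A tuple of four sequences `j k : Fin (n+1) → ℕ` is bad if the pairing condition holds
at every step `i ∈ {0, …, n−1}`. -/
def IsBad (n : ℕ) (j : Fin 4 → Fin (n + 1) → ℕ) : Prop :=
  ∀ i : Fin n, StepOK (fun k => j k i.castSucc) (fun k => j k i.succ)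

/-- The number of bad tuples with entries in `{1, …, d}` with `j^1_0 = j^2_0 = 1` and
`j^3_0 = j^4_0 = 2`. -/
noncomputable def badCountOneTwo (n d : ℕ) : ℕ :=
  Nat.card {j : Fin 4 → Fin (n + 1) → ℕ //
    (∀ k i, j k i ∈ Finset.Icc 1 d) ∧ IsBad n j ∧
      j 0 0 = 1 ∧ j 1 0 = 1 ∧ j 2 0 = 2 ∧ j 3 0 = 2}

/-!
A bad tuple is a walk of columns `v₀ = (1, 1, 2, 2), v₁, …, vₙ ∈ [d]⁴` in which any two
consecutive columns are constant on the blocks of a common perfect matching of the four indices.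
Classify a column by the set of matchings it is constant on: all three for a constant column,
otherwise at most one. A step is allowed exactly when the two classes meet, and a nonempty class
contains `d` columns (constant), `d (d - 1)` columns (exactly one matching) or none (two
matchings), so the walks are counted by the `n`-th power of a transfer matrix over the classes
with entries `0`, `X`, `X (X - 1)`, evaluated at `d`. The degree-two coefficients of that matrix
fix the unit row vector of the start class `{12|34}`, so its row sum is monic of degree `2n`.
-/

open Finset Polynomial

namespace BadTuple

section Chains

variable {β : Type*} [DecidableEq β] (R : β → β → Prop) [DecidableRel R] (B : Finset β) (c : β)

def chains (n : ℕ) : Finset (Fin (n + 1) → β) :=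
  {w ∈ Fintype.piFinset fun _ => B | w 0 = c ∧ ∀ i : Fin n, R (w i.castSucc) (w i.succ)}

theorem chains_zero (hc : c ∈ B) : chains R B c 0 = {fun _ => c} := by
  ext w
  simp only [chains, mem_filter, Fintype.mem_piFinset, mem_singleton, funext_iff,
    IsEmpty.forall_iff, and_true]
  exact ⟨fun ⟨_, h0⟩ i => Fin.fin_one_eq_zero i ▸ h0, fun h => ⟨fun i => (h i).symm ▸ hc, h 0⟩⟩

theorem snoc_mem_chains_iff {n : ℕ} {w : Fin (n + 1) → β} {v : β} :
    Fin.snoc w v ∈ chains R B c (n + 1) ↔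
      w ∈ chains R B c n ∧ v ∈ B ∧ R (w (Fin.last n)) v := by
  simp only [chains, mem_filter, Fintype.mem_piFinset, Fin.forall_fin_succ', Fin.snoc_castSucc,
    Fin.snoc_last, Fin.succ_last, Fin.succ_castSucc]
  tauto

theorem card_filter_chains_succ (P : β → Prop) [DecidablePred P] (n : ℕ) :
    #{w ∈ chains R B c (n + 1) | P (w (Fin.last _))} =
      ∑ w ∈ chains R B c n, #{v ∈ B | R (w (Fin.last n)) v ∧ P v} := by
  rw [← card_sigma]
  refine card_bij' (fun w _ => ⟨Fin.init w, w (Fin.last _)⟩) (fun p _ => Fin.snoc p.1 p.2)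
    (fun w hw => ?_) (fun p hp => ?_) (fun w _ => Fin.snoc_init_self w) (fun p _ => ?_)
  · rw [mem_filter, ← Fin.snoc_init_self w, snoc_mem_chains_iff, Fin.snoc_last] at hw
    simp only [mem_sigma, mem_filter]
    tauto
  · simp only [mem_sigma, mem_filter] at hp
    simp only [mem_filter, snoc_mem_chains_iff, Fin.snoc_last]
    tauto
  · simp only [Fin.init_snoc, Fin.snoc_last]

section Lumping

variable {σ : Type*} [Fintype σ] [DecidableEq σ] (τ : β → σ) (ρ : σ → σ → Prop) [DecidableRel ρ]

def lumpedTransfer : Matrix σ σ ℕ :=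
  Matrix.of fun S T => if ρ S T then #{v ∈ B | τ v = T} else 0

variable {R B c τ ρ}

theorem card_filter_chains_eq_lumpedTransfer_pow (hR : ∀ u v, R u v ↔ ρ (τ u) (τ v))
    (hc : c ∈ B) (n : ℕ) (T : σ) :
    #{w ∈ chains R B c n | τ (w (Fin.last n)) = T} = (lumpedTransfer B τ ρ ^ n) (τ c) T := by
  induction n generalizing T with
  | zero =>
    rw [chains_zero R B c hc, pow_zero, Matrix.one_apply, filter_singleton]
    split_ifs <;> rfl
  | succ n ih =>
    have hstep : ∀ u, #{v ∈ B | R u v ∧ τ v = T} = lumpedTransfer B τ ρ (τ u) T := by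
      intro u
      simp only [lumpedTransfer, Matrix.of_apply, hR]
      split_ifs with h
      · exact congrArg card (filter_congr fun v _ => ⟨And.right, fun hv => ⟨hv ▸ h, hv⟩⟩)
      · exact card_eq_zero.mpr (filter_false_of_mem fun v _ ⟨hρ, hv⟩ => h (hv ▸ hρ))
    rw [card_filter_chains_succ R B c (fun v => τ v = T), pow_succ, Matrix.mul_apply]
    simp_rw [hstep, ← ih]
    rw [← sum_fiberwise' (chains R B c n) (fun w => τ (w (Fin.last n)))
      (fun S => lumpedTransfer B τ ρ S T)]
    simp_rw [sum_const, smul_eq_mul]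

theorem card_chains_eq_sum_lumpedTransfer_pow (hR : ∀ u v, R u v ↔ ρ (τ u) (τ v))
    (hc : c ∈ B) (n : ℕ) :
    #(chains R B c n) = ∑ T, (lumpedTransfer B τ ρ ^ n) (τ c) T := by
  simp_rw [← card_filter_chains_eq_lumpedTransfer_pow hR hc]
  exact card_eq_sum_card_fiberwise fun _ _ => mem_univ _

end Lumping

end Chains

section MatrixCoeff

variable {l m ι R : Type*} [Fintype m] [Semiring R]

theorem natDegree_mul_apply_le {A : Matrix l m R[X]} {B : Matrix m ι R[X]} {a b : ℕ}
    (hA : ∀ i j, (A i j).natDegree ≤ a) (hB : ∀ i j, (B i j).natDegree ≤ b) (i : l) (j : ι) :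
    ((A * B) i j).natDegree ≤ a + b :=
  natDegree_sum_le_of_forall_le _ _ fun k _ => natDegree_mul_le_of_le (hA i k) (hB k j)

theorem coeff_mul_apply_add {A : Matrix l m R[X]} {B : Matrix m ι R[X]} {a b : ℕ}
    (hA : ∀ i j, (A i j).natDegree ≤ a) (hB : ∀ i j, (B i j).natDegree ≤ b) (i : l) (j : ι) :
    ((A * B) i j).coeff (a + b) = (A.map (coeff · a) * B.map (coeff · b)) i j := by
  simp only [Matrix.mul_apply, finsetSum_coeff, Matrix.map_apply,
    coeff_mul_add_eq_of_natDegree_le (hA i _) (hB _ j)]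

variable [Fintype ι] [DecidableEq ι]

theorem natDegree_pow_apply_le_and_map_coeff {A : Matrix ι ι R[X]} {k : ℕ}
    (hA : ∀ i j, (A i j).natDegree ≤ k) (n : ℕ) :
    (∀ i j, ((A ^ n) i j).natDegree ≤ k * n) ∧
      (A ^ n).map (coeff · (k * n)) = A.map (coeff · k) ^ n := by
  induction n with
  | zero =>
    refine ⟨fun i j => ?_, Matrix.map_one _ (coeff_zero _) coeff_one_zero⟩
    rw [pow_zero, Matrix.one_apply]
    split_ifs <;> simp
  | succ n ih =>
    refine ⟨natDegree_mul_apply_le ih.1 hA, ?_⟩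
    ext i j
    rw [Matrix.map_apply, mul_add_one, pow_succ, coeff_mul_apply_add ih.1 hA, ih.2, pow_succ]

end MatrixCoeff

section ConstOnFibers

variable {ι κ α : Type*} [Fintype ι] [DecidableEq ι] [Fintype κ] [DecidableEq κ]
  [DecidableEq α]

theorem card_filter_piFinset_constOnFibers {c : ι → κ} (hc : Function.Surjective c)
    (s : Finset α) :
    #{v ∈ Fintype.piFinset fun _ : ι => s | ∀ k l, c k = c l → v k = v l} =
      #s ^ Fintype.card κ := by
  have himage : {v ∈ Fintype.piFinset fun _ : ι => s | ∀ k l, c k = c l → v k = v l} =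
      (Fintype.piFinset fun _ : κ => s).map ⟨(· ∘ c), hc.injective_comp_right⟩ := by
    ext v
    simp only [mem_filter, Fintype.mem_piFinset, mem_map, Function.Embedding.coeFn_mk]
    constructor
    · rintro ⟨hs, hv⟩
      refine ⟨v ∘ Function.surjInv hc, fun b => hs _, funext fun k => hv _ _ ?_⟩
      exact Function.surjInv_eq hc _
    · rintro ⟨w, hw, rfl⟩
      exact ⟨fun k => hw (c k), fun k l hkl => by simp [hkl]⟩
  rw [himage, card_map, Fintype.card_piFinset, prod_const, card_univ]

end ConstOnFibers

section Pairings

variable {α : Type*}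

/-- The matching `M : Fin 3` of `Fin 4` pairs `0` with `M + 1`; `blockOf M` labels its blocks. -/
def blockOf : Fin 3 → Fin 4 → Fin 2 := ![![0, 0, 1, 1], ![0, 1, 0, 1], ![0, 1, 1, 0]]

theorem blockOf_surjective (M : Fin 3) : Function.Surjective (blockOf M) := by
  revert M; decide

def Paired (M : Fin 3) (v : Fin 4 → α) : Prop := ∀ k l, blockOf M k = blockOf M l → v k = v l

instance [DecidableEq α] (M : Fin 3) (v : Fin 4 → α) : Decidable (Paired M v) :=
  inferInstanceAs (Decidable (∀ k l, blockOf M k = blockOf M l → v k = v l))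

section

variable {v : Fin 4 → α}

theorem paired_zero_iff : Paired 0 v ↔ v 0 = v 1 ∧ v 2 = v 3 := by
  refine ⟨fun h => ⟨h 0 1 rfl, h 2 3 rfl⟩, fun ⟨h01, h23⟩ k l hkl => ?_⟩
  fin_cases k <;> fin_cases l <;> simp_all [blockOf]

theorem paired_one_iff : Paired 1 v ↔ v 0 = v 2 ∧ v 1 = v 3 := by
  refine ⟨fun h => ⟨h 0 2 rfl, h 1 3 rfl⟩, fun ⟨h02, h13⟩ k l hkl => ?_⟩
  fin_cases k <;> fin_cases l <;> simp_all [blockOf]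

theorem paired_two_iff : Paired 2 v ↔ v 0 = v 3 ∧ v 1 = v 2 := by
  refine ⟨fun h => ⟨h 0 3 rfl, h 1 2 rfl⟩, fun ⟨h03, h12⟩ k l hkl => ?_⟩
  fin_cases k <;> fin_cases l <;> simp_all [blockOf]

theorem forall_eq_of_paired_of_paired {M M' : Fin 3} (hne : M ≠ M') (hM : Paired M v)
    (hM' : Paired M' v) (k l : Fin 4) : v k = v l := by
  have hconn : ∀ M M' : Fin 3, M ≠ M' →
      ∀ k, ∃ j, blockOf M k = blockOf M j ∧ blockOf M' j = blockOf M' 0 := by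
    decide
  have h0 : ∀ k, v k = v 0 := fun k => by
    obtain ⟨j, hkj, hj0⟩ := hconn M M' hne k
    exact (hM k j hkj).trans (hM' j 0 hj0)
  rw [h0 k, h0 l]

end

theorem stepOK_iff_exists_paired {u v : Fin 4 → ℕ} :
    StepOK u v ↔ ∃ M, Paired M u ∧ Paired M v := by
  simp only [Fin.exists_fin_succ, Fin.exists_fin_zero, Fin.succ_zero_eq_one, Fin.succ_one_eq_two,
    or_false, paired_zero_iff, paired_one_iff, paired_two_iff]
  constructor
  · rintro ⟨p, q, r, s, hpqrs, h1, h2, h3, h4⟩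
    have hmem : ∀ x : Fin 4, x = p ∨ x = q ∨ x = r ∨ x = s := fun x => by
      have hx := mem_univ x
      rw [← hpqrs] at hx
      simpa using hx
    rcases hmem 0 with h | h | h | h <;> rcases hmem 1 with g | g | g | g <;>
      rcases hmem 2 with e | e | e | e <;> rcases hmem 3 with f | f | f | f <;>
      subst_vars <;> omega
  · rintro (⟨⟨h1, h2⟩, h3, h4⟩ | ⟨⟨h1, h2⟩, h3, h4⟩ | ⟨⟨h1, h2⟩, h3, h4⟩)
    · exact ⟨0, 1, 2, 3, by decide, h1, h3, h2, h4⟩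
    · exact ⟨0, 2, 1, 3, by decide, h1, h3, h2, h4⟩
    · exact ⟨0, 3, 1, 2, by decide, h1, h3, h2, h4⟩

variable [DecidableEq α]

def pairings (v : Fin 4 → α) : Finset (Fin 3) := {M | Paired M v}

theorem stepOK_iff_not_disjoint {u v : Fin 4 → ℕ} :
    StepOK u v ↔ ¬Disjoint (pairings u) (pairings v) := by
  simp [stepOK_iff_exists_paired, not_disjoint_iff, pairings]

section

variable {v : Fin 4 → α}

theorem pairings_eq_univ_iff : pairings v = univ ↔ ∀ k l, v k = v l := by
  simp only [pairings, eq_univ_iff_forall, mem_filter, mem_univ, true_and]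
  exact ⟨fun h => forall_eq_of_paired_of_paired (by decide : (0 : Fin 3) ≠ 1) (h 0) (h 1),
    fun h M k l _ => h k l⟩

theorem pairings_eq_singleton_iff {M : Fin 3} :
    pairings v = {M} ↔ Paired M v ∧ ¬∀ k l, v k = v l := by
  rw [← pairings_eq_univ_iff]
  constructor
  · intro h
    refine ⟨by simpa [pairings] using h.symm.subset (mem_singleton_self M), fun hu => ?_⟩
    simpa using congrArg card (hu.symm.trans h)
  · rintro ⟨hM, hconst⟩
    ext M'
    simp only [pairings, mem_filter, mem_univ, true_and, mem_singleton]
    refine ⟨fun hM' => ?_, fun h => h ▸ hM⟩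
    by_contra hne
    exact hconst (pairings_eq_univ_iff.mpr (forall_eq_of_paired_of_paired hne hM' hM))

theorem pairings_eq_univ_of_one_lt_card (h : 1 < #(pairings v)) : pairings v = univ := by
  obtain ⟨M, hM, M', hM', hne⟩ := one_lt_card.mp h
  simp only [pairings, mem_filter, mem_univ, true_and] at hM hM'
  exact pairings_eq_univ_iff.mpr (forall_eq_of_paired_of_paired hne hM hM')

end

theorem card_filter_paired (s : Finset α) (M : Fin 3) :
    #{v ∈ Fintype.piFinset fun _ => s | Paired M v} = #s ^ 2 := by
  rw [← Fintype.card_fin 2]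
  convert card_filter_piFinset_constOnFibers (blockOf_surjective M) s using 3
  exact Iff.rfl

theorem card_filter_forall_eq (s : Finset α) :
    #{v ∈ Fintype.piFinset fun _ : Fin 4 => s | ∀ k l, v k = v l} = #s := by
  have hc : Function.Surjective fun _ : Fin 4 => (0 : Fin 1) := fun _ => ⟨0, Subsingleton.elim _ _⟩
  simpa using card_filter_piFinset_constOnFibers hc s

noncomputable def pairingsPoly (T : Finset (Fin 3)) : ℤ[X] :=
  if T = univ then X else if #T = 1 then X * (X - 1) else 0

theorem card_filter_pairings_eq_eval (s : Finset α) {T : Finset (Fin 3)} (hT : T.Nonempty) :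
    (#{v ∈ Fintype.piFinset fun _ => s | pairings v = T} : ℤ) =
      (pairingsPoly T).eval (#s : ℤ) := by
  unfold pairingsPoly
  split_ifs with huniv hone
  · simp_rw [huniv, pairings_eq_univ_iff, card_filter_forall_eq, eval_X]
  · obtain ⟨M, rfl⟩ := card_eq_one.mp hone
    simp_rw [pairings_eq_singleton_iff]
    rw [filter_and_not, card_sdiff_of_subset (monotone_filter_right _ fun v _ h k l _ => h k l),
      card_filter_paired, card_filter_forall_eq, Nat.cast_sub (Nat.le_self_pow two_ne_zero _)]
    simp only [eval_mul, eval_sub, eval_X, eval_one]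
    push_cast
    ring
  · rw [eval_zero, Nat.cast_eq_zero, card_eq_zero, filter_eq_empty_iff]
    rintro v - rfl
    exact huniv (pairings_eq_univ_of_one_lt_card (by
      have := hT.card_pos
      omega))

end Pairings

section Transfer

instance : DecidableRel StepOK := fun u v => by unfold StepOK; infer_instance

noncomputable def transferPoly : Matrix (Finset (Fin 3)) (Finset (Fin 3)) ℤ[X] :=
  Matrix.of fun S T => if Disjoint S T then 0 else pairingsPoly T

theorem map_lumpedTransfer_eq {α : Type*} [DecidableEq α] (s : Finset α) :
    (lumpedTransfer (Fintype.piFinset fun _ : Fin 4 => s) pairings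
      fun S T => ¬Disjoint S T).map (Nat.cast : ℕ → ℤ) = transferPoly.map (eval (#s : ℤ)) := by
  ext S T
  simp only [Matrix.map_apply, lumpedTransfer, transferPoly, Matrix.of_apply]
  split_ifs with h
  · simp
  · obtain ⟨M, -, hM⟩ := not_disjoint_iff.mp h
    exact card_filter_pairings_eq_eval s ⟨M, hM⟩

theorem card_chains_stepOK_eq_eval (s : Finset ℕ) {c : Fin 4 → ℕ}
    (hc : c ∈ Fintype.piFinset fun _ => s) (n : ℕ) :
    (#(chains StepOK (Fintype.piFinset fun _ => s) c n) : ℤ) =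
      (∑ T, (transferPoly ^ n) (pairings c) T).eval (#s : ℤ) := by
  have hmap : (Nat.castRingHom ℤ).mapMatrix
      ((lumpedTransfer (Fintype.piFinset fun _ : Fin 4 => s) pairings
        fun S T => ¬Disjoint S T) ^ n) =
      (evalRingHom (#s : ℤ)).mapMatrix (transferPoly ^ n) := by
    rw [map_pow, map_pow]
    exact congrArg (· ^ n) (map_lumpedTransfer_eq s)
  rw [card_chains_eq_sum_lumpedTransfer_pow (τ := pairings) (ρ := fun S T => ¬Disjoint S T)
      (fun _ _ => stepOK_iff_not_disjoint) hc,
    eval_finsetSum, Nat.cast_sum]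
  refine sum_congr rfl fun T _ => ?_
  simpa using congrFun (congrFun (congrArg ((↑) : _ → Matrix _ _ ℤ) hmap) (pairings c)) T

theorem natDegree_transferPoly_le (S T : Finset (Fin 3)) : (transferPoly S T).natDegree ≤ 2 := by
  simp only [transferPoly, Matrix.of_apply, pairingsPoly]
  split_ifs <;> compute_degree!

theorem coeff_transferPoly_singleton (M : Fin 3) (T : Finset (Fin 3)) :
    (transferPoly {M} T).coeff 2 = if T = {M} then 1 else 0 := by
  have hsq : (X * (X - 1) : ℤ[X]).coeff 2 = 1 := by simp [mul_sub, ← sq, coeff_X]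
  by_cases hT : T = {M}
  · subst hT
    simp [transferPoly, pairingsPoly, hsq]
  · simp only [transferPoly, Matrix.of_apply, pairingsPoly, if_neg hT, disjoint_singleton_left]
    split_ifs with hM huniv hone <;> try simp [coeff_X]
    obtain ⟨a, rfl⟩ := card_eq_one.mp hone
    simp_all

theorem map_coeff_transferPoly_pow_singleton (M : Fin 3) (n : ℕ) (T : Finset (Fin 3)) :
    (transferPoly.map (coeff · 2) ^ n) {M} T = (1 : Matrix (Finset (Fin 3)) _ ℤ) {M} T := by
  induction n generalizing T with
  | zero => rw [pow_zero]
  | succ n ih =>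
    rw [pow_succ, Matrix.mul_apply]
    simp_rw [ih, ← Matrix.mul_apply, Matrix.one_mul, Matrix.map_apply,
      coeff_transferPoly_singleton, Matrix.one_apply, eq_comm]

theorem natDegree_eq_and_monic_sum_transferPoly_pow (M : Fin 3) (n : ℕ) :
    (∑ T, (transferPoly ^ n) {M} T).natDegree = 2 * n ∧
      (∑ T, (transferPoly ^ n) {M} T).Monic := by
  obtain ⟨hdeg, hcoeff⟩ := natDegree_pow_apply_le_and_map_coeff natDegree_transferPoly_le n
  have hle : (∑ T, (transferPoly ^ n) {M} T).natDegree ≤ 2 * n :=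
    natDegree_sum_le_of_forall_le _ _ fun T _ => hdeg _ _
  have hlead : (∑ T, (transferPoly ^ n) {M} T).coeff (2 * n) = 1 := by
    simp_rw [finsetSum_coeff, ← Matrix.map_apply (f := (coeff · (2 * n))), hcoeff,
      map_coeff_transferPoly_pow_singleton, Matrix.one_apply]
    simp
  exact ⟨natDegree_eq_of_le_of_coeff_ne_zero hle (by simp [hlead]),
    monic_of_natDegree_le_of_coeff_eq_one _ hle hlead⟩

end Transfer

theorem badCountOneTwo_eq_card_chains (n d : ℕ) :
    badCountOneTwo n d =
      #(chains StepOK (Fintype.piFinset fun _ => Icc 1 d) ![1, 1, 2, 2] n) := by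
  rw [badCountOneTwo, ← Nat.card_eq_finsetCard]
  refine Nat.card_congr (Equiv.subtypeEquiv (Equiv.piComm _) fun j => ?_)
  have hstart : (fun k => j k 0) = ![1, 1, 2, 2] ↔
      j 0 0 = 1 ∧ j 1 0 = 1 ∧ j 2 0 = 2 ∧ j 3 0 = 2 := by
    simp [funext_iff, Fin.forall_fin_succ]
  show _ ↔ (fun i k => j k i) ∈ _
  simp only [chains, mem_filter, Fintype.mem_piFinset, hstart]
  rw [forall_comm]
  exact ⟨fun ⟨hbox, hbad, hj⟩ => ⟨hbox, hj, hbad⟩, fun ⟨hbox, hj, hbad⟩ => ⟨hbox, hbad, hj⟩⟩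

theorem pairings_one_one_two_two : pairings ![1, 1, 2, 2] = {0} := by decide

end BadTuple

theorem badCountOneTwo_poly_general (n : ℕ) :
    ∃ p : Polynomial ℤ, p.natDegree = 2 * n ∧ p.leadingCoeff = 1 ∧
      ∀ d : ℕ, 2 ≤ d → (badCountOneTwo n d : ℤ) = p.eval (d : ℤ) := by
  obtain ⟨hdeg, hmonic⟩ := BadTuple.natDegree_eq_and_monic_sum_transferPoly_pow 0 n
  refine ⟨_, hdeg, hmonic, fun d hd => ?_⟩
  have hstart : ![1, 1, 2, 2] ∈ Fintype.piFinset fun _ : Fin 4 => Icc 1 d := by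
    simpa [Fin.forall_fin_succ] using ⟨one_le_two.trans hd, hd⟩
  rw [BadTuple.badCountOneTwo_eq_card_chains, BadTuple.card_chains_stepOK_eq_eval _ hstart,
    BadTuple.pairings_one_one_two_two, Nat.card_Icc, Nat.add_sub_cancel]

theorem badCountOneTwo_poly (n : ℕ) (hn : 1 ≤ n) :
    ∃ p : Polynomial ℤ, p.natDegree = 2 * n ∧ p.leadingCoeff = 1 ∧
      ∀ d : ℕ, 2 ≤ d → (badCountOneTwo n d : ℤ) = p.eval (d : ℤ) :=
  badCountOneTwo_poly_general n
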